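/- The graph NM-hat, whose vertices are the 28 nonsingular symmetric 3×3 matrices over GF(2) and in which two distinct vertices A and B are adjacent if and only if A+B has all diagonal entries zero, is isomorphic to the disjoint union of 7 copies of the complete graph K₄ (i.e., to the graph on Fin 7 × Fin 4 in which (i,a) and (j,b) are adjacent iff i = j and a ≠ b). -/

import Mathlib

open scoped Classical

/-- The graph `NM-hat`: vertices are the symmetric `3 × 3` matrices over `GF(2)` with
nonzero determinant; two distinct vertices `A, B` are adjacent iff `A + B` has zero
diagonal (i.e. the third point of the line `AB` lies in the nuclei plane `N`). -/
noncomputable def NMhat :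
    SimpleGraph {M : Matrix (Fin 3) (Fin 3) (ZMod 2) // M.IsSymm ∧ M.det ≠ 0} where
  Adj A B := A ≠ B ∧ (A.1 + B.1) 0 0 = 0 ∧ (A.1 + B.1) 1 1 = 0 ∧ (A.1 + B.1) 2 2 = 0
  symm := ⟨fun A B h => ⟨h.1.symm, by rw [add_comm]; exact h.2⟩⟩
  loopless := ⟨fun A h => h.1 rfl⟩

/-- The disjoint union of `7` copies of the complete graph `K₄`. -/
def sevenK4 : SimpleGraph (Fin 7 × Fin 4) where
  Adj p q := p.1 = q.1 ∧ p.2 ≠ q.2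
  symm := ⟨fun p q h => ⟨h.1.symm, h.2.symm⟩⟩
  loopless := ⟨fun p h => h.2 rfl⟩


/-! In characteristic 2, `A + B` has zero diagonal iff `A` and `B` have the same diagonal, so
`NM-hat` is the disjoint union of the complete graphs on the fibres of the diagonal map. A
symmetric `3 × 3` matrix with zero diagonal has determinant `2 a b c = 0`, so the diagonal of a
vertex is one of the 7 nonzero vectors of `GF(2)³`, and each of these fibres has 4 elements. -/

theorem Prod.fst_eq_and_snd_ne_iff {α β : Type*} (p q : α × β) :
    p.1 = q.1 ∧ p.2 ≠ q.2 ↔ p ≠ q ∧ p.1 = q.1 := by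
  simp only [Ne, Prod.ext_iff]; tauto

variable {V W ι κ : Type*}

namespace Equiv

noncomputable def prodOfFiberEquiv (f : V → W) (e : ∀ w, {v // f v = w} ≃ κ) : V ≃ W × κ :=
  (sigmaFiberEquiv f).symm.trans ((sigmaCongrRight e).trans (sigmaEquivProd W κ))

theorem prodOfFiberEquiv_fst (f : V → W) (e : ∀ w, {v // f v = w} ≃ κ) (v : V) :
    (prodOfFiberEquiv f e v).1 = f v := rfl

end Equiv

namespace SimpleGraph

noncomputable def isoOfAdjIffFiber (G : SimpleGraph V) (H : SimpleGraph (ι × κ)) (f : V → W)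
    (hG : ∀ a b, G.Adj a b ↔ a ≠ b ∧ f a = f b) (hH : ∀ p q, H.Adj p q ↔ p.1 = q.1 ∧ p.2 ≠ q.2)
    (eW : W ≃ ι) (eF : ∀ w, {v // f v = w} ≃ κ) : G ≃g H where
  toEquiv := (Equiv.prodOfFiberEquiv f eF).trans (eW.prodCongr (Equiv.refl κ))
  map_rel_iff' {a b} := by
    rw [hH, Prod.fst_eq_and_snd_ne_iff, hG, Ne, (Equiv.injective _).eq_iff]
    simp [Equiv.prodOfFiberEquiv_fst]

end SimpleGraph

theorem Matrix.det_fin_three_of_isSymm_of_diag_eq_zero {R : Type*} [CommRing R]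
    {A : Matrix (Fin 3) (Fin 3) R} (hA : A.IsSymm) (hd : A.diag = 0) :
    A.det = 2 * A 0 1 * A 0 2 * A 1 2 := by
  have h i : A i i = 0 := congrFun hd i
  rw [Matrix.det_fin_three, h, h, h, hA.apply 1 0, hA.apply 2 0, hA.apply 2 1]
  ring

abbrev NM := {M : Matrix (Fin 3) (Fin 3) (ZMod 2) // M.IsSymm ∧ M.det ≠ 0}

theorem NM.diag_ne_zero (A : NM) : A.1.diag ≠ 0 := fun hd => A.2.2 <| by
  rw [Matrix.det_fin_three_of_isSymm_of_diag_eq_zero A.2.1 hd]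
  simp [show (2 : ZMod 2) = 0 from rfl]

def NM.diagNZ (A : NM) : {d : Fin 3 → ZMod 2 // d ≠ 0} := ⟨A.1.diag, A.diag_ne_zero⟩

theorem NMhat_adj_iff (A B : NM) : NMhat.Adj A B ↔ A ≠ B ∧ A.diagNZ = B.diagNZ := by
  simp [NMhat, NM.diagNZ, funext_iff, Fin.forall_fin_succ, CharTwo.add_eq_zero]

theorem card_nonzero_fin_three_zmod_two : Fintype.card {d : Fin 3 → ZMod 2 // d ≠ 0} = 7 := by decide

/- Over a fibre with diagonal `d`, the determinant is `d₀d₁d₂ + d₀c + d₁b + d₂a` in the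
off-diagonal entries `a, b, c`: affine with nonzero linear part, so nonzero at 4 of the 8 points. -/
theorem NM.card_fiber_diagNZ (d : {d : Fin 3 → ZMod 2 // d ≠ 0}) :
    Fintype.card {A : NM // A.diagNZ = d} = 4 := by
  revert d; decide

/-- `NM-hat` is isomorphic to the disjoint union of `7` copies of `K₄`. -/
theorem NMhat_iso_sevenK4 : Nonempty (NMhat ≃g sevenK4) :=
  ⟨NMhat.isoOfAdjIffFiber sevenK4 NM.diagNZ NMhat_adj_iff (fun _ _ => Iff.rfl)
    (Fintype.equivFinOfCardEq card_nonzero_fin_three_zmod_two)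
    (fun d => Fintype.equivFinOfCardEq (NM.card_fiber_diagNZ d))⟩
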